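/- For every k ∈ ω + 1 and every valuation tree T ⊆ T_2 of height k, there exists a unique structural isomorphism f : T_2(<k) → T, where T_2(<k) denotes the set of nodes of T_2 of level less than k (all of T_2 when k = ω). -/

import Mathlib

open scoped Classical

section AbstractTrees

variable {α : Type*} [PartialOrder α]

/-- The set of strict predecessors of `t` inside `U`. -/
def predsIn (U : Set α) (t : α) : Set α := {s ∈ U | s < t}

/-- The level of a node `t` in the tree `U`: the number of its strict predecessors in `U`. -/
noncomputable def levelIn (U : Set α) (t : α) : ℕ := (predsIn U t).ncard

/-- `U` is a tree: the set of strict predecessors of every node is finite and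
linearly ordered. -/
def IsTreeOn (U : Set α) : Prop :=
  ∀ t ∈ U, (predsIn U t).Finite ∧
    ∀ s₁ ∈ predsIn U t, ∀ s₂ ∈ predsIn U t, s₁ ≤ s₂ ∨ s₂ ≤ s₁

/-- The height of the tree `U`: the least `n` such that `U` has no node of level `n`
(equivalently, for trees, the supremum of `level + 1`), or `ω = ⊤` if there is no such `n`. -/
noncomputable def heightIn (U : Set α) : ℕ∞ :=
  ⨆ t ∈ U, ((levelIn U t : ℕ∞) + 1)

/-- The level set `L_U(D)` of `D` in `U`. -/
def levelSetIn (U D : Set α) : Set ℕ := levelIn U '' D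

/-- `t` is a maximal node of `U`. -/
def IsMaximalIn (U : Set α) (t : α) : Prop := t ∈ U ∧ ∀ s ∈ U, ¬ t < s

/-- `U` is rooted: it has a unique minimal element below all of its nodes. -/
def IsRootedIn (U : Set α) : Prop := ∃ r ∈ U, ∀ t ∈ U, r ≤ t

/-- `U` is balanced: either it has infinite height and no maximal nodes, or all its
maximal nodes lie on level `h(U) - 1`. -/
def IsBalanced (U : Set α) : Prop :=
  (heightIn U = ⊤ ∧ ∀ t, ¬ IsMaximalIn U t) ∨
  (heightIn U ≠ ⊤ ∧ ∀ t, IsMaximalIn U t → ((levelIn U t : ℕ∞) + 1 = heightIn U))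

/-- `m` is the meet `s ∧_U t` of `s` and `t` in `U`. -/
def IsMeetIn (U : Set α) (s t m : α) : Prop :=
  m ∈ U ∧ m ≤ s ∧ m ≤ t ∧ ∀ m' ∈ U, m' ≤ s → m' ≤ t → m' ≤ m

/-- `S` is a subtree of `U`: a subset closed under binary meets (taken in `U`). -/
def IsSubtreeOf (U S : Set α) : Prop :=
  S ⊆ U ∧ ∀ s ∈ S, ∀ t ∈ S, ∃ m ∈ S, IsMeetIn U s t m

/-- `t` is an immediate successor of `s` in `U`. -/
def IsImmSuccIn (U : Set α) (s t : α) : Prop :=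
  s ∈ U ∧ t ∈ U ∧ s < t ∧ ∀ u ∈ U, s < u → ¬ u < t

/-- `U` is finitely branching. -/
def IsFinBranching (U : Set α) : Prop :=
  ∀ t ∈ U, {s | IsImmSuccIn U t s}.Finite

/-- `S` is a strong subtree of `U`: it is a subtree which is either empty, or is
rooted, balanced, has each of its levels contained in a single level of `U`, and for every
non-maximal node `s ∈ S` and every immediate successor `t` of `s` in `U` there is exactly
one immediate successor of `s` in `S` above `t`. -/
def IsStrongSubtreeOf (U S : Set α) : Prop :=
  IsSubtreeOf U S ∧
  (S = ∅ ∨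
    (IsRootedIn S ∧ IsBalanced S ∧
      (∀ s ∈ S, ∀ t ∈ S, levelIn S s = levelIn S t → levelIn U s = levelIn U t) ∧
      (∀ s ∈ S, ¬ IsMaximalIn S s → ∀ t, IsImmSuccIn U s t →
        ∃! c, IsImmSuccIn S s c ∧ t ≤ c)))

end AbstractTrees

/-- A finite `{0,1}`-vector: a function `len → Bool`, represented with total entry
function which vanishes from index `len` on. Nodes of the tree `T₁`. -/
structure Vec where
  len : ℕ
  entry : ℕ → Bool
  outside : ∀ i, len ≤ i → entry i = false

/-- A finite strictly lower triangular square `{0,1}`-matrix: a function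
`size × size → Bool` with `entry i j = 0` for `i ≤ j`, represented with a total entry
function which vanishes outside. Nodes of the tree `T₂`. -/
structure Mat where
  size : ℕ
  entry : ℕ → ℕ → Bool
  lower : ∀ i j, i ≤ j → entry i j = false
  outside : ∀ i j, size ≤ i → entry i j = false

/-- The tree order on `T₁`: end-extension of finite `{0,1}`-vectors. -/
instance : PartialOrder Vec where
  le u v := u.len ≤ v.len ∧ ∀ i, i < u.len → u.entry i = v.entry i
  le_refl u := ⟨le_rfl, fun _ _ => rfl⟩
  le_trans u v w h h' :=
    ⟨h.1.trans h'.1, fun i hi => (h.2 i hi).trans (h'.2 i (lt_of_lt_of_le hi h.1))⟩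
  le_antisymm u v h h' := by
    have hl : u.len = v.len := le_antisymm h.1 h'.1
    have he : u.entry = v.entry := by
      funext i
      by_cases hi : i < u.len
      · exact h.2 i hi
      · rw [u.outside i (not_lt.mp hi), v.outside i (by omega)]
    cases u; cases v
    simp only at hl he
    subst hl; subst he; rfl

/-- The tree order on `T₂`: extension of strictly lower triangular `{0,1}`-matrices. -/
instance : PartialOrder Mat where
  le A B := A.size ≤ B.size ∧ ∀ i j, i < A.size → j < A.size → A.entry i j = B.entry i j
  le_refl A := ⟨le_rfl, fun _ _ _ _ => rfl⟩
  le_trans A B C h h' :=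
    ⟨h.1.trans h'.1, fun i j hi hj => (h.2 i j hi hj).trans
      (h'.2 i j (lt_of_lt_of_le hi h.1) (lt_of_lt_of_le hj h.1))⟩
  le_antisymm A B h h' := by
    have hl : A.size = B.size := le_antisymm h.1 h'.1
    have he : A.entry = B.entry := by
      funext i j
      by_cases hi : i < A.size
      · by_cases hj : j < A.size
        · exact h.2 i j hi hj
        · -- j ≥ A.size and i < A.size, so i < j and both entries vanish
          rw [A.lower i j (by omega), B.lower i j (by omega)]
      · rw [A.outside i j (not_lt.mp hi), B.outside i j (by omega)]
    cases A; cases B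
    simp only at hl he
    subst hl; subst he; rfl

/-- The extension `A⌢v` of an `n × n` matrix `A` by a vector `v` of length `n`:
the `(n+1) × (n+1)` matrix extending `A` whose last row is `v` followed by `0` and whose
last column is zero. -/
def matExtend (A : Mat) (v : Vec) : Mat where
  size := A.size + 1
  entry := fun i j =>
    if i < A.size then A.entry i j
    else if i = A.size ∧ j < A.size then v.entry j else false
  lower := by
    intro i j hij
    by_cases h1 : i < A.size
    · simp only [if_pos h1]
      exact A.lower i j hij
    · show (if i < A.size then A.entry i j
          else if i = A.size ∧ j < A.size then v.entry j else false) = false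
      rw [if_neg h1, if_neg (by omega)]
  outside := by
    intro i j hi
    show (if i < A.size then A.entry i j
        else if i = A.size ∧ j < A.size then v.entry j else false) = false
    rw [if_neg (by omega), if_neg (by omega)]

/-- The `m`-th row of a matrix `A`, as a `{0,1}`-vector of length `|A|`. -/
def rowOf (A : Mat) (m : ℕ) : Vec where
  len := A.size
  entry := fun l => A.entry m l
  outside := by
    intro l hl
    rcases le_or_gt m l with h | h
    · exact A.lower m l h
    · exact A.outside m l (hl.trans h.le)
/-- A 3-uniform hypergraph on a vertex set `V`: a set of hyperedges, each a 3-element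
subset of `V`. -/
structure HGraph (V : Type*) where
  edges : Set (Finset V)
  card_eq : ∀ e ∈ edges, e.card = 3

/-- An embedding of 3-uniform hypergraphs: an injective map `f` between the vertex sets
such that `{x, y, z}` is a hyperedge if and only if `{f x, f y, f z}` is a hyperedge. -/
def IsHGEmbedding {V W : Type*} (A : HGraph V) (B : HGraph W) (f : V → W) : Prop :=
  Function.Injective f ∧
    ∀ x y z : V, ({x, y, z} : Finset V) ∈ A.edges ↔ ({f x, f y, f z} : Finset W) ∈ B.edges

/-- The 3-uniform hypergraph `G`: its vertices are the nodes of the tree `T₂`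
(i.e. finite strictly lower triangular `{0,1}`-matrices), and `{A, B, C}` is a hyperedge
if and only if `|A| < |B| < |C|` and `C_{|B|, |A|} = 1`. -/
noncomputable def Ghyp : HGraph Mat where
  edges := {e | ∃ A B C : Mat, e = {A, B, C} ∧
    A.size < B.size ∧ B.size < C.size ∧ C.entry B.size A.size = true}
  card_eq := by
    rintro e ⟨A, B, C, rfl, h1, h2, -⟩
    refine Finset.card_eq_three.mpr ⟨A, B, C, ?_, ?_, ?_, rfl⟩
    · exact fun h => absurd (congrArg Mat.size h) (by omega)
    · exact fun h => absurd (congrArg Mat.size h) (by omega)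
    · exact fun h => absurd (congrArg Mat.size h) (by omega)

/-- Given a 3-uniform hypergraph `H` on `ℕ`, the matrix `A^i` assigned to the vertex
`i`: the `(2i+1) × (2i+1)` strictly lower triangular `{0,1}`-matrix with
`A^i_{2k+1, 2j} = A^i_{2k+1, 2j+1} = 1` for every hyperedge `{j, k, i}` of `H` with
`j < k < i`, and all other entries `0`. -/
noncomputable def matOf (H : HGraph ℕ) (i : ℕ) : Mat where
  size := 2 * i + 1
  entry := fun r c =>
    if r % 2 = 1 ∧ c / 2 < r / 2 ∧ r / 2 < i ∧ ({c / 2, r / 2, i} : Finset ℕ) ∈ H.edges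
    then true else false
  lower := by
    intro r c hrc
    show (if r % 2 = 1 ∧ c / 2 < r / 2 ∧ r / 2 < i ∧ ({c / 2, r / 2, i} : Finset ℕ) ∈ H.edges
        then true else false) = false
    rw [if_neg]
    rintro ⟨h1, h2, h3, -⟩
    omega
  outside := by
    intro r c hr
    show (if r % 2 = 1 ∧ c / 2 < r / 2 ∧ r / 2 < i ∧ ({c / 2, r / 2, i} : Finset ℕ) ∈ H.edges
        then true else false) = false
    rw [if_neg]
    rintro ⟨h1, h2, h3, -⟩
    omega

/-- The valuation tree `val(S₁, S₂)` corresponding to a vector strong subtree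
`(S₁, S₂)` of `(T₁, T₂)`, as a predicate: the root of `S₂` belongs to it, and whenever
`A` belongs to it, `v ∈ S₁(|A|_{S₂})` and `{C} = ImmSucc_{S₂}(A) ∩ Succ_{T₂}(A⌢v)`,
then `C` belongs to it. -/
inductive InVal (S₁ : Set Vec) (S₂ : Set Mat) : Mat → Prop where
  | root (A : Mat) (hA : A ∈ S₂) (hroot : ∀ B ∈ S₂, A ≤ B) : InVal S₁ S₂ A
  | step (A : Mat) (v : Vec) (C : Mat) (hA : InVal S₁ S₂ A) (hv : v ∈ S₁)
      (hlev : levelIn S₁ v = levelIn S₂ A)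
      (hC : IsImmSuccIn S₂ A C ∧ matExtend A v ≤ C)
      (huniq : ∀ C' : Mat, IsImmSuccIn S₂ A C' ∧ matExtend A v ≤ C' → C' = C) :
      InVal S₁ S₂ C

/-- `(S₁, S₂)` is a vector strong subtree of the vector tree `(T₁, T₂)`:
both coordinates are strong subtrees of the respective (ambient) trees and the pair is
level compatible, i.e. `L_{T₁}(S₁) = L_{T₂}(S₂)`. -/
def IsVecStrongPair (S₁ : Set Vec) (S₂ : Set Mat) : Prop :=
  IsStrongSubtreeOf Set.univ S₁ ∧ IsStrongSubtreeOf Set.univ S₂ ∧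
    levelSetIn Set.univ S₁ = levelSetIn Set.univ S₂

/-- A subset of `T₂` is a valuation tree if it equals `val(S₁, S₂)` for some vector
strong subtree `(S₁, S₂)` of `(T₁, T₂)`. -/
def IsValTree (T : Set Mat) : Prop :=
  ∃ S₁ S₂, IsVecStrongPair S₁ S₂ ∧ T = {C | InVal S₁ S₂ C}

/-- A structural isomorphism between subtrees `T` and `T'` of `T₂`: an isomorphism of
trees preserving relative heights of nodes such that, for all `A, B, C ∈ T` with
`|A| ≤ |B| < |C|`, one has `f(C)_{|f(B)|, |f(A)|} = C_{|B|, |A|}`. -/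
structure IsStructIso (T T' : Set Mat) (f : Mat → Mat) : Prop where
  mapsTo : ∀ A ∈ T, f A ∈ T'
  injOn : ∀ A ∈ T, ∀ B ∈ T, f A = f B → A = B
  surjOn : ∀ C ∈ T', ∃ A ∈ T, f A = C
  orderIso : ∀ A ∈ T, ∀ B ∈ T, (A ≤ B ↔ f A ≤ f B)
  levelEq : ∀ A ∈ T, levelIn T A = levelIn T' (f A)
  passing : ∀ A ∈ T, ∀ B ∈ T, ∀ C ∈ T, A.size ≤ B.size → B.size < C.size →
    (f C).entry (f B).size (f A).size = C.entry B.size A.size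

/-!
Let `N n` be the ambient level (= size) of the nodes on level `n` of `S₂`; by level
compatibility it is also the length of the vectors on level `n` of `S₁`. Reading a node `C`
of `val(S₁, S₂)` only at rows and columns `N 0 < N 1 < …` gives a matrix of size
`levelIn C`. By induction on the level this compression is a bijection from the `n`-th
level of `val(S₁, S₂)` onto all `n × n` matrices: the step `A ↦ C` with `A⌢v ≤ C` adds
the row `(v_{N j})_{j < n}`, and on each level of `S₁` the bits `v_{N j}` are free and
determine `v` (strong subtrees of `T₁` branch in exactly the same way as `T₁`). Its inverse
is a structural isomorphism, and the passing-number condition forces any structural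
isomorphism to be inverse to the compression.
-/

class IsTreeOrder (α : Type*) [PartialOrder α] : Prop where
  finite_Iio : ∀ t : α, (Set.Iio t).Finite
  le_total_of_le : ∀ {s t u : α}, s ≤ u → t ≤ u → s ≤ t ∨ t ≤ s

section LevelsInTrees

variable {α : Type*} [PartialOrder α] {U V : Set α} {s t : α}

theorem levelIn_eq_levelIn_of_subset (hUV : U ⊆ V) (h : ∀ s ∈ V, s < t → s ∈ U) :
    levelIn U t = levelIn V t := by
  unfold levelIn predsIn
  congr 1
  ext s
  exact ⟨fun hs => ⟨hUV hs.1, hs.2⟩, fun hs => ⟨h s hs.1 hs.2, hs.2⟩⟩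

theorem IsTreeOrder.of_strictMono (r : α → ℕ) (hr : StrictMono r)
    (h : ∀ {s t u : α}, s ≤ u → t ≤ u → r s ≤ r t → s ≤ t) : IsTreeOrder α where
  finite_Iio t := by
    refine Set.Finite.of_finite_image (f := r) ((Set.finite_Iio (r t)).subset ?_)
      fun x (hx : x < t) y (hy : y < t) hxy => ?_
    · rintro _ ⟨x, hx, rfl⟩
      exact hr hx
    · exact le_antisymm (h hx.le hy.le hxy.le) (h hy.le hx.le hxy.ge)
  le_total_of_le hs ht := (le_total (r _) (r _)).imp (h hs ht) (h ht hs)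

theorem levelIn_lt_heightIn (ht : t ∈ U) : (levelIn U t : ℕ∞) < heightIn U :=
  (ENat.lt_add_one_iff (ENat.natCast_ne_top _)).mpr le_rfl |>.trans_le <|
    le_iSup₂ (f := fun t (_ : t ∈ U) => (levelIn U t : ℕ∞) + 1) t ht

variable [IsTreeOrder α]

theorem predsIn_finite (U : Set α) (t : α) : (predsIn U t).Finite :=
  (IsTreeOrder.finite_Iio t).subset fun _ hs => hs.2

theorem levelIn_lt_levelIn (hs : s ∈ U) (hst : s < t) : levelIn U s < levelIn U t := by
  refine Set.ncard_lt_ncard ⟨fun x hx => ⟨hx.1, hx.2.trans hst⟩, fun h => ?_⟩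
    (predsIn_finite U t)
  exact (h ⟨hs, hst⟩).2.false

theorem levelIn_le_levelIn (hs : s ∈ U) (hst : s ≤ t) : levelIn U s ≤ levelIn U t := by
  rcases hst.lt_or_eq with h | rfl
  · exact (levelIn_lt_levelIn hs h).le
  · rfl

theorem eq_of_levelIn_eq {u : α} (hs : s ∈ U) (ht : t ∈ U) (hsu : s ≤ u) (htu : t ≤ u)
    (h : levelIn U s = levelIn U t) : s = t := by
  rcases IsTreeOrder.le_total_of_le hsu htu with hst | hts
  · exact hst.eq_of_not_lt fun hlt => (levelIn_lt_levelIn hs hlt).ne h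
  · exact (hts.eq_of_not_lt fun hlt => (levelIn_lt_levelIn ht hlt).ne h.symm).symm

theorem levelIn_eq_succ_of_isImmSuccIn (h : IsImmSuccIn U s t) :
    levelIn U t = levelIn U s + 1 := by
  obtain ⟨hs, -, hst, hbetween⟩ := h
  have hsub : predsIn U t ⊆ insert s (predsIn U s) := by
    intro x hx
    rcases eq_or_ne x s with rfl | hxs
    · exact Set.mem_insert x _
    refine Or.inr ⟨hx.1, ?_⟩
    rcases IsTreeOrder.le_total_of_le hx.2.le hst.le with hxs' | hsx
    · exact lt_of_le_of_ne hxs' hxs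
    · exact (hbetween x hx.1 (lt_of_le_of_ne hsx hxs.symm) hx.2).elim
  have hle := (Set.ncard_le_ncard hsub ((predsIn_finite U s).insert s)).trans
    (Set.ncard_insert_le s (predsIn U s))
  have hlt := levelIn_lt_levelIn (U := U) hs hst
  unfold levelIn at hlt ⊢
  omega

theorem exists_isImmSuccIn_of_levelIn_eq_succ {n : ℕ} (ht : t ∈ U) (hn : levelIn U t = n + 1) :
    ∃ s, IsImmSuccIn U s t ∧ levelIn U s = n := by
  have hne : (predsIn U t).Nonempty := by
    rw [← Set.ncard_pos (predsIn_finite U t)]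
    exact (show (predsIn U t).ncard = n + 1 from hn) ▸ n.succ_pos
  obtain ⟨s, hs, hmax⟩ := (predsIn_finite U t).exists_maximal hne
  have himm : IsImmSuccIn U s t :=
    ⟨hs.1, ht, hs.2, fun u hu hsu hut => (hmax ⟨hu, hut⟩ hsu.le).not_gt hsu⟩
  exact ⟨s, himm, by have := levelIn_eq_succ_of_isImmSuccIn himm; omega⟩

theorem exists_le_levelIn_eq (ht : t ∈ U) {m : ℕ} (hm : m ≤ levelIn U t) :
    ∃ s ∈ U, s ≤ t ∧ levelIn U s = m := by
  obtain ⟨n, hn⟩ : ∃ n, levelIn U t = n := ⟨_, rfl⟩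
  induction n generalizing t with
  | zero => exact ⟨t, ht, le_rfl, by omega⟩
  | succ n ih =>
    rcases eq_or_lt_of_le (hn ▸ hm) with rfl | hlt
    · exact ⟨t, ht, le_rfl, hn⟩
    obtain ⟨s, hst, hs⟩ := exists_isImmSuccIn_of_levelIn_eq_succ ht hn
    obtain ⟨u, hu, hus, hum⟩ := ih hst.1 (by omega) hs
    exact ⟨u, hu, hus.trans hst.2.2.1.le, hum⟩

theorem exists_levelIn_eq_of_lt_heightIn {n : ℕ} (hn : (n : ℕ∞) < heightIn U) :
    ∃ t ∈ U, levelIn U t = n := by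
  obtain ⟨t, ht, hlt⟩ : ∃ t ∈ U, (n : ℕ∞) < levelIn U t + 1 := by
    simpa [heightIn, lt_iSup_iff] using hn
  have hle : (n : ℕ∞) ≤ levelIn U t := (ENat.lt_add_one_iff (ENat.natCast_ne_top _)).mp hlt
  obtain ⟨s, hs, -, hsn⟩ := exists_le_levelIn_eq ht (m := n) (by exact_mod_cast hle)
  exact ⟨s, hs, hsn⟩

theorem levelIn_univ_eq_of_strictMono (r : α → ℕ) (hr : StrictMono r)
    (hdown : ∀ t, ∀ m < r t, ∃ s < t, r s = m) (t : α) : levelIn Set.univ t = r t := by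
  have hinj : (predsIn Set.univ t).InjOn r := fun x hx y hy hxy => by
    rcases IsTreeOrder.le_total_of_le hx.2.le hy.2.le with h | h
    · exact h.eq_of_not_lt fun hlt => (hr hlt).ne hxy
    · exact (h.eq_of_not_lt fun hlt => (hr hlt).ne hxy.symm).symm
  have himage : r '' predsIn Set.univ t = Set.Iio (r t) := by
    ext m
    refine ⟨?_, fun hm => ?_⟩
    · rintro ⟨x, hx, rfl⟩
      exact hr hx.2
    · obtain ⟨s, hst, rfl⟩ := hdown t m hm
      exact ⟨s, ⟨trivial, hst⟩, rfl⟩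
  rw [levelIn, ← hinj.ncard_image, himage, Set.ncard_Iio_nat]

theorem IsRootedIn.eq_of_levelIn_eq_zero (hU : IsRootedIn U) (hs : s ∈ U) (ht : t ∈ U)
    (hs0 : levelIn U s = 0) (ht0 : levelIn U t = 0) : s = t := by
  obtain ⟨r, hr, hroot⟩ := hU
  have hlevel0 : ∀ x ∈ U, levelIn U x = 0 → x = r := fun x hx hx0 =>
    ((hroot x hx).eq_of_not_lt fun hlt => by simpa [hx0] using levelIn_lt_levelIn hr hlt).symm
  rw [hlevel0 s hs hs0, hlevel0 t ht ht0]

end LevelsInTrees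

noncomputable def ambientLevel {α : Type*} [PartialOrder α] (U S : Set α) (n : ℕ) : ℕ :=
  Nat.nth (· ∈ levelSetIn U S) n

namespace IsStrongSubtreeOf

variable {α : Type*} [PartialOrder α] {U S : Set α} {s t u : α}

theorem levelIn_eq (hS : IsStrongSubtreeOf U S) (hs : s ∈ S) (ht : t ∈ S)
    (h : levelIn S s = levelIn S t) : levelIn U s = levelIn U t :=
  (hS.2.resolve_left (Set.nonempty_of_mem hs).ne_empty).2.2.1 s hs t ht h

theorem existsUnique_immSucc (hS : IsStrongSubtreeOf U S) (hs : s ∈ S)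
    (hmax : ¬ IsMaximalIn S s) (ht : IsImmSuccIn U s t) : ∃! c, IsImmSuccIn S s c ∧ t ≤ c :=
  (hS.2.resolve_left (Set.nonempty_of_mem hs).ne_empty).2.2.2 s hs hmax t ht

variable [IsTreeOrder α]

theorem eq_of_levelIn_eq_zero (hS : IsStrongSubtreeOf U S) (hs : s ∈ S) (ht : t ∈ S)
    (hs0 : levelIn S s = 0) (ht0 : levelIn S t = 0) : s = t :=
  (hS.2.resolve_left (Set.nonempty_of_mem hs).ne_empty).1.eq_of_levelIn_eq_zero hs ht hs0 ht0

theorem not_isMaximalIn_of_levelIn_eq (hS : IsStrongSubtreeOf U S) (hs : s ∈ S)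
    (hu : u ∈ S) (hsu : s < u) (h : levelIn S s = levelIn S t) : ¬ IsMaximalIn S t := by
  intro htmax
  rcases (hS.2.resolve_left (Set.nonempty_of_mem hs).ne_empty).2.1 with
    ⟨-, hnomax⟩ | ⟨-, hmax⟩
  · exact hnomax t htmax
  · have hu_le : (levelIn S u : ℕ∞) + 1 ≤ levelIn S t + 1 :=
      (hmax t htmax).symm ▸ Order.add_one_le_of_lt (levelIn_lt_heightIn hu)
    have hlt := levelIn_lt_levelIn hs hsu
    have : levelIn S u + 1 ≤ levelIn S t + 1 := by exact_mod_cast hu_le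
    omega

theorem levelIn_lt_of_levelIn_lt (hS : IsStrongSubtreeOf U S) (hs : s ∈ S) (ht : t ∈ S)
    (h : levelIn U s < levelIn U t) : levelIn S s < levelIn S t := by
  by_contra! hts
  obtain ⟨s', hs', hs's, hlevel⟩ := exists_le_levelIn_eq hs hts
  have := levelIn_le_levelIn (hS.1.1 hs') hs's
  have := hS.levelIn_eq hs' ht hlevel
  omega

theorem levelIn_eq_count (hS : IsStrongSubtreeOf U S) (hs : s ∈ S) :
    levelIn S s = Nat.count (· ∈ levelSetIn U S) (levelIn U s) := by
  have hinj : (predsIn S s).InjOn (levelIn U) := fun x hx y hy =>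
    eq_of_levelIn_eq (hS.1.1 hx.1) (hS.1.1 hy.1) hx.2.le hy.2.le
  have himage : levelIn U '' predsIn S s = levelSetIn U S ∩ Set.Iio (levelIn U s) := by
    ext m
    refine ⟨?_, ?_⟩
    · rintro ⟨x, hx, rfl⟩
      exact ⟨⟨x, hx.1, rfl⟩, levelIn_lt_levelIn (hS.1.1 hx.1) hx.2⟩
    · rintro ⟨⟨x, hx, rfl⟩, hxs⟩
      have hlt := hS.levelIn_lt_of_levelIn_lt hx hs hxs
      obtain ⟨y, hy, hys, hyx⟩ := exists_le_levelIn_eq hs hlt.le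
      refine ⟨y, ⟨hy, lt_of_le_of_ne hys ?_⟩, hS.levelIn_eq hy hx hyx⟩
      rintro rfl
      omega
  rw [levelIn, ← hinj.ncard_image, himage, Nat.count_eq_card_filter_range,
    ← Set.ncard_coe_finset]
  congr 1
  ext m
  simp [and_comm]

theorem levelIn_eq_ambientLevel (hS : IsStrongSubtreeOf U S) (hs : s ∈ S) :
    levelIn U s = ambientLevel U S (levelIn S s) := by
  rw [hS.levelIn_eq_count hs, ambientLevel, Nat.nth_count ⟨s, hs, rfl⟩]

theorem ambientLevel_lt_levelIn (hS : IsStrongSubtreeOf U S) (hs : s ∈ S) {j : ℕ}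
    (hj : j < levelIn S s) : ambientLevel U S j < levelIn U s := by
  obtain ⟨t, ht, hts, rfl⟩ := exists_le_levelIn_eq hs hj.le
  rw [← hS.levelIn_eq_ambientLevel ht]
  exact levelIn_lt_levelIn (hS.1.1 ht) (lt_of_le_of_ne hts (by rintro rfl; omega))

end IsStrongSubtreeOf

namespace Vec

theorem ext {v w : Vec} (hlen : v.len = w.len) (hentry : ∀ i < v.len, v.entry i = w.entry i) :
    v = w := by
  obtain ⟨n, e, he⟩ := v
  obtain ⟨n', e', he'⟩ := w
  obtain rfl : n = n' := hlen
  obtain rfl : e = e' := funext fun i => by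
    by_cases hi : i < n
    · exact hentry i hi
    · rw [he i (not_lt.mp hi), he' i (not_lt.mp hi)]
  rfl

theorem len_lt_len {v w : Vec} (h : v < w) : v.len < w.len :=
  lt_of_le_of_ne h.le.1 fun hlen => h.ne (ext hlen h.le.2)

theorem le_of_le_of_len_le {u v w : Vec} (hu : u ≤ w) (hv : v ≤ w) (hlen : u.len ≤ v.len) :
    u ≤ v :=
  ⟨hlen, fun i hi => (hu.2 i hi).trans (hv.2 i (lt_of_lt_of_le hi hlen)).symm⟩

def restrict (v : Vec) (n : ℕ) : Vec where
  len := n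
  entry i := if i < n then v.entry i else false
  outside _ hi := if_neg (by omega)

def extend (v : Vec) (b : Bool) : Vec where
  len := v.len + 1
  entry i := if i = v.len then b else v.entry i
  outside i hi := by rw [if_neg (by omega)]; exact v.outside i (by omega)

instance : IsTreeOrder Vec := .of_strictMono Vec.len (fun _ _ => len_lt_len) le_of_le_of_len_le

theorem levelIn_univ (v : Vec) : levelIn Set.univ v = v.len := by
  refine levelIn_univ_eq_of_strictMono Vec.len (fun _ _ => len_lt_len) (fun v m hm => ?_) v
  refine ⟨v.restrict m, lt_of_le_of_ne ⟨hm.le, fun i hi => if_pos hi⟩ fun h => ?_, rfl⟩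
  exact hm.ne (congrArg Vec.len h)

theorem extend_entry_len (v : Vec) (b : Bool) : (v.extend b).entry v.len = b := if_pos rfl

theorem extend_le {v w : Vec} (h : v ≤ w) (hlen : v.len < w.len) :
    v.extend (w.entry v.len) ≤ w := by
  refine ⟨hlen, fun i hi => ?_⟩
  by_cases hiv : i = v.len
  · subst hiv
    exact extend_entry_len v _
  · exact (if_neg hiv).trans (h.2 i (by have : i < v.len + 1 := hi; omega))

theorem isImmSuccIn_univ_extend (v : Vec) (b : Bool) : IsImmSuccIn Set.univ v (v.extend b) := by
  have hlt : v < v.extend b := lt_of_le_of_ne ⟨v.len.le_succ, fun i hi => (if_neg hi.ne).symm⟩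
    fun h => by simpa [extend] using congrArg Vec.len h
  refine ⟨trivial, trivial, hlt, fun u _ hvu hu => ?_⟩
  have := len_lt_len hvu
  have := len_lt_len hu
  simp only [extend] at this
  omega

end Vec

namespace Mat

theorem ext {A B : Mat} (hsize : A.size = B.size)
    (hentry : ∀ i j, j < i → i < A.size → A.entry i j = B.entry i j) : A = B := by
  obtain ⟨n, e, hl, ho⟩ := A
  obtain ⟨n', e', hl', ho'⟩ := B
  obtain rfl : n = n' := hsize
  obtain rfl : e = e' := funext₂ fun i j => by
    by_cases hi : i < n
    · by_cases hj : j < i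
      · exact hentry i j hj hi
      · rw [hl i j (not_lt.mp hj), hl' i j (not_lt.mp hj)]
    · rw [ho i j (not_lt.mp hi), ho' i j (not_lt.mp hi)]
  rfl

theorem entry_eq_of_le {A B : Mat} (h : A ≤ B) {i j : ℕ} (hi : i < A.size) :
    A.entry i j = B.entry i j := by
  by_cases hj : j < A.size
  · exact h.2 i j hi hj
  · rw [A.lower i j (by omega), B.lower i j (by omega)]

theorem le_of_entry_eq {A B : Mat} (hsize : A.size ≤ B.size)
    (hentry : ∀ i j, j < i → i < A.size → A.entry i j = B.entry i j) : A ≤ B := by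
  refine ⟨hsize, fun i j hi _ => ?_⟩
  by_cases hji : j < i
  · exact hentry i j hji hi
  · rw [A.lower i j (not_lt.mp hji), B.lower i j (not_lt.mp hji)]

theorem size_lt_size {A B : Mat} (h : A < B) : A.size < B.size :=
  lt_of_le_of_ne h.le.1 fun hsize =>
    h.ne (ext hsize fun _ _ _ hi => entry_eq_of_le h.le hi)

theorem le_of_le_of_size_le {A B C : Mat} (hA : A ≤ C) (hB : B ≤ C)
    (hsize : A.size ≤ B.size) : A ≤ B :=
  le_of_entry_eq hsize fun _ _ _ hi =>
    (entry_eq_of_le hA hi).trans (entry_eq_of_le hB (lt_of_lt_of_le hi hsize)).symm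

theorem eq_of_le_of_size_eq {A B C : Mat} (hA : A ≤ C) (hB : B ≤ C) (hsize : A.size = B.size) :
    A = B :=
  le_antisymm (le_of_le_of_size_le hA hB hsize.le) (le_of_le_of_size_le hB hA hsize.ge)

def restrict (A : Mat) (n : ℕ) : Mat where
  size := n
  entry i j := if i < n then A.entry i j else false
  lower i j hij := by
    split_ifs
    · exact A.lower i j hij
    · rfl
  outside _ _ hi := if_neg (by omega)

theorem restrict_entry (A : Mat) {n i : ℕ} (j : ℕ) (hi : i < n) :
    (A.restrict n).entry i j = A.entry i j := if_pos hi

theorem restrict_lt {A : Mat} {n : ℕ} (hn : n < A.size) : A.restrict n < A :=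
  lt_of_le_of_ne ⟨hn.le, fun _ j hi _ => restrict_entry A j hi⟩
    fun h => hn.ne (congrArg Mat.size h)

instance : IsTreeOrder Mat := .of_strictMono Mat.size (fun _ _ => size_lt_size) le_of_le_of_size_le

instance : Inhabited Mat := ⟨⟨0, fun _ _ => false, fun _ _ _ => rfl, fun _ _ _ => rfl⟩⟩

theorem levelIn_univ (A : Mat) : levelIn Set.univ A = A.size :=
  levelIn_univ_eq_of_strictMono Mat.size (fun _ _ => size_lt_size)
    (fun _ _ hm => ⟨_, restrict_lt hm, rfl⟩) A

theorem levelIn_setOf_size_lt {k : ℕ∞} {A : Mat} (hA : (A.size : ℕ∞) < k) :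
    levelIn {B : Mat | (B.size : ℕ∞) < k} A = A.size := by
  refine (levelIn_eq_levelIn_of_subset (Set.subset_univ _) fun B _ hB => ?_).trans (levelIn_univ A)
  exact lt_trans (by exact_mod_cast size_lt_size hB) hA

theorem entry_size_eq_of_matExtend_le {A C : Mat} {v : Vec} (h : matExtend A v ≤ C) {j : ℕ}
    (hj : j < A.size) : C.entry A.size j = v.entry j := by
  rw [← entry_eq_of_le h (by simp [matExtend])]
  show (if A.size < A.size then _
    else if A.size = A.size ∧ j < A.size then v.entry j else false) = _
  rw [if_neg (lt_irrefl _), if_pos ⟨rfl, hj⟩]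

theorem isImmSuccIn_univ_matExtend (A : Mat) (v : Vec) :
    IsImmSuccIn Set.univ A (matExtend A v) := by
  have hlt : A < matExtend A v :=
    lt_of_le_of_ne ⟨A.size.le_succ, fun i j hi _ => (if_pos hi).symm⟩
      fun h => by simpa [matExtend] using congrArg Mat.size h
  refine ⟨trivial, trivial, hlt, fun B _ hAB hB => ?_⟩
  have := size_lt_size hAB
  have := size_lt_size hB
  simp only [matExtend] at this
  omega

def compress (C : Mat) (N : ℕ → ℕ) (n : ℕ) : Mat where
  size := n
  entry i j := if j < i ∧ i < n then C.entry (N i) (N j) else false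
  lower _ _ hij := if_neg fun h => by omega
  outside _ _ hi := if_neg fun h => by omega

theorem compress_entry (C : Mat) (N : ℕ → ℕ) {n i j : ℕ} (hji : j < i) (hi : i < n) :
    (C.compress N n).entry i j = C.entry (N i) (N j) := if_pos ⟨hji, hi⟩

theorem compress_le_compress {A C : Mat} (h : A ≤ C) {N : ℕ → ℕ} {m n : ℕ} (hmn : m ≤ n)
    (hN : ∀ i < m, N i < A.size) : A.compress N m ≤ C.compress N n :=
  le_of_entry_eq hmn fun i j hji (hi : i < m) => by
    rw [compress_entry A N hji hi, compress_entry C N hji (lt_of_lt_of_le hi hmn),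
      entry_eq_of_le h (hN i hi)]

end Mat

namespace IsStrongSubtreeOf

variable {S : Set Vec}

theorem len_eq_ambientLevel (hS : IsStrongSubtreeOf Set.univ S) {v : Vec} (hv : v ∈ S) :
    v.len = ambientLevel Set.univ S (levelIn S v) := by
  rw [← Vec.levelIn_univ, hS.levelIn_eq_ambientLevel hv]

theorem ambientLevel_lt_len (hS : IsStrongSubtreeOf Set.univ S) {v : Vec} (hv : v ∈ S) {j : ℕ}
    (hj : j < levelIn S v) : ambientLevel Set.univ S j < v.len :=
  Vec.levelIn_univ v ▸ hS.ambientLevel_lt_levelIn hv hj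

theorem eq_of_entry_ambientLevel_eq (hS : IsStrongSubtreeOf Set.univ S) {n : ℕ} {v w : Vec}
    (hv : v ∈ S) (hw : w ∈ S) (hvn : levelIn S v = n) (hwn : levelIn S w = n)
    (hentry : ∀ j < n,
      v.entry (ambientLevel Set.univ S j) = w.entry (ambientLevel Set.univ S j)) :
    v = w := by
  induction n generalizing v w with
  | zero => exact hS.eq_of_levelIn_eq_zero hv hw hvn hwn
  | succ n ih =>
    obtain ⟨p, hpv, hpn⟩ := exists_isImmSuccIn_of_levelIn_eq_succ hv hvn
    obtain ⟨q, hqw, hqn⟩ := exists_isImmSuccIn_of_levelIn_eq_succ hw hwn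
    have hlt : ∀ j < n, ambientLevel Set.univ S j < p.len ∧ ambientLevel Set.univ S j < q.len :=
      fun j hj => ⟨hS.ambientLevel_lt_len hpv.1 (hpn ▸ hj),
        hS.ambientLevel_lt_len hqw.1 (hqn ▸ hj)⟩
    obtain rfl : p = q := ih hpv.1 hqw.1 hpn hqn fun j hj => by
      rw [hpv.2.2.1.le.2 _ (hlt j hj).1, hqw.2.2.1.le.2 _ (hlt j hj).2, hentry j (by omega)]
    have hplen : p.len = ambientLevel Set.univ S n := hpn ▸ hS.len_eq_ambientLevel hpv.1
    have hbit : w.entry p.len = v.entry p.len := by rw [hplen, hentry n n.lt_succ_self]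
    have hvext := Vec.extend_le hpv.2.2.1.le (Vec.len_lt_len hpv.2.2.1)
    have hwext := hbit ▸ Vec.extend_le hqw.2.2.1.le (Vec.len_lt_len hqw.2.2.1)
    exact (hS.existsUnique_immSucc hpv.1 (fun hmax => hmax.2 v hv hpv.2.2.1)
      (Vec.isImmSuccIn_univ_extend p _)).unique
      ⟨hpv, hvext⟩ ⟨hqw, hwext⟩

theorem exists_entry_ambientLevel_eq (hS : IsStrongSubtreeOf Set.univ S) {x : Vec} (hx : x ∈ S)
    (bits : ℕ → Bool) {n : ℕ} (hn : n ≤ levelIn S x) :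
    ∃ v ∈ S, levelIn S v = n ∧ ∀ j < n, v.entry (ambientLevel Set.univ S j) = bits j := by
  induction n with
  | zero =>
    obtain ⟨v, hv, -, hv0⟩ := exists_le_levelIn_eq hx hn
    exact ⟨v, hv, hv0, fun j hj => absurd hj j.not_lt_zero⟩
  | succ n ih =>
    obtain ⟨p, hp, hpn, hpbits⟩ := ih (by omega)
    obtain ⟨y, hy, hyx, hyn⟩ := exists_le_levelIn_eq hx (m := n) (by omega)
    have hyx : y < x := lt_of_le_of_ne hyx (by rintro rfl; omega)
    have hpmax := hS.not_isMaximalIn_of_levelIn_eq hy hx hyx (hyn.trans hpn.symm)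
    obtain ⟨c, ⟨hpc, hext⟩, -⟩ :=
      hS.existsUnique_immSucc hp hpmax (Vec.isImmSuccIn_univ_extend p (bits n))
    refine ⟨c, hpc.2.1, by rw [levelIn_eq_succ_of_isImmSuccIn hpc, hpn], fun j hj => ?_⟩
    have hplen : p.len = ambientLevel Set.univ S n := hpn ▸ hS.len_eq_ambientLevel hp
    rcases Nat.lt_succ_iff_lt_or_eq.mp hj with hj | rfl
    · rw [← hpc.2.2.1.le.2 _ (hS.ambientLevel_lt_len hp (hpn ▸ hj)), hpbits j hj]
    · rw [← hplen, ← hext.2 _ p.len.lt_succ_self, Vec.extend_entry_len]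

theorem size_eq_ambientLevel {S : Set Mat} (hS : IsStrongSubtreeOf Set.univ S) {A : Mat}
    (hA : A ∈ S) : A.size = ambientLevel Set.univ S (levelIn S A) := by
  rw [← Mat.levelIn_univ, hS.levelIn_eq_ambientLevel hA]

theorem ambientLevel_lt_size {S : Set Mat} (hS : IsStrongSubtreeOf Set.univ S) {A : Mat}
    (hA : A ∈ S) {j : ℕ} (hj : j < levelIn S A) : ambientLevel Set.univ S j < A.size :=
  Mat.levelIn_univ A ▸ hS.ambientLevel_lt_levelIn hA hj

end IsStrongSubtreeOf

def valTree (S₁ : Set Vec) (S₂ : Set Mat) : Set Mat := {C | InVal S₁ S₂ C}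

namespace InVal

variable {S₁ : Set Vec} {S₂ : Set Mat} {C : Mat}

theorem mem (h : InVal S₁ S₂ C) : C ∈ S₂ := by
  induction h with
  | root _ hA _ => exact hA
  | step _ _ _ _ _ _ hC _ _ => exact hC.1.2.1

theorem of_lt (h : InVal S₁ S₂ C) {D : Mat} (hD : D ∈ S₂) (hDC : D < C) :
    InVal S₁ S₂ D := by
  induction h generalizing D with
  | root _ _ hroot => exact absurd (hroot D hD) (not_le_of_gt hDC)
  | step A _ _ hA _ _ hC _ ih =>
    rcases IsTreeOrder.le_total_of_le hDC.le hC.1.2.2.1.le with hDA | hAD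
    · rcases hDA.lt_or_eq with hDA | rfl
      · exact ih hD hDA
      · exact hA
    · rcases hAD.lt_or_eq with hAD | rfl
      · exact absurd hDC (hC.1.2.2.2 D hD hAD)
      · exact hA

theorem exists_step (h : InVal S₁ S₂ C) {n : ℕ} (hn : levelIn S₂ C = n + 1) :
    ∃ A v, InVal S₁ S₂ A ∧ levelIn S₂ A = n ∧ v ∈ S₁ ∧ levelIn S₁ v = n ∧
      IsImmSuccIn S₂ A C ∧ matExtend A v ≤ C ∧
      ∀ C', IsImmSuccIn S₂ A C' ∧ matExtend A v ≤ C' → C' = C := by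
  cases h with
  | root _ _ hroot =>
    have hpreds : predsIn S₂ C = ∅ :=
      Set.eq_empty_of_forall_notMem fun D hD => not_le_of_gt hD.2 (hroot D hD.1)
    simp [levelIn, hpreds] at hn
  | step A v _ hA hv hlev hC huniq =>
    have := levelIn_eq_succ_of_isImmSuccIn hC.1
    exact ⟨A, v, hA, by omega, hv, by omega, hC.1, hC.2, huniq⟩

end InVal

variable {S₁ : Set Vec} {S₂ : Set Mat}

theorem levelIn_valTree {C : Mat} (hC : C ∈ valTree S₁ S₂) :
    levelIn (valTree S₁ S₂) C = levelIn S₂ C :=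
  levelIn_eq_levelIn_of_subset (fun _ hD => InVal.mem hD) fun _ hD hDC => InVal.of_lt hC hD hDC

namespace IsVecStrongPair

theorem ambientLevel_eq (hP : IsVecStrongPair S₁ S₂) :
    ambientLevel Set.univ S₁ = ambientLevel Set.univ S₂ := by
  unfold ambientLevel
  rw [hP.2.2]

theorem eq_of_compress_eq (hP : IsVecStrongPair S₁ S₂) {n : ℕ} {C C' : Mat}
    (hC : InVal S₁ S₂ C) (hC' : InVal S₁ S₂ C') (hCn : levelIn S₂ C = n)
    (hC'n : levelIn S₂ C' = n)
    (heq : C.compress (ambientLevel Set.univ S₂) n = C'.compress (ambientLevel Set.univ S₂) n) :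
    C = C' := by
  set N := ambientLevel Set.univ S₂
  induction n generalizing C C' with
  | zero => exact hP.2.1.eq_of_levelIn_eq_zero hC.mem hC'.mem hCn hC'n
  | succ n ih =>
    obtain ⟨A, v, hA, hAn, hv, hvn, hAC, hvC, huniq⟩ := hC.exists_step hCn
    obtain ⟨A', v', hA', hA'n, hv', hv'n, hA'C', hv'C', -⟩ := hC'.exists_step hC'n
    have hNA : ∀ i < n, N i < A.size :=
      fun i hi => hP.2.1.ambientLevel_lt_size hA.mem (hAn ▸ hi)
    have hNA' : ∀ i < n, N i < A'.size :=
      fun i hi => hP.2.1.ambientLevel_lt_size hA'.mem (hA'n ▸ hi)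
    obtain rfl : A = A' := ih hA hA' hAn hA'n <| Mat.eq_of_le_of_size_eq
      ((Mat.compress_le_compress hAC.2.2.1.le n.le_succ hNA).trans_eq heq)
      (Mat.compress_le_compress hA'C'.2.2.1.le n.le_succ hNA') rfl
    have hsize : A.size = N n := hAn ▸ hP.2.1.size_eq_ambientLevel hA.mem
    -- `v_{N j}` is the entry `(n, j)` of the compression of `C`, and likewise for `v'`
    obtain rfl : v = v' := hP.1.eq_of_entry_ambientLevel_eq hv hv' hvn hv'n fun j hj => by
      rw [hP.ambientLevel_eq, ← Mat.entry_size_eq_of_matExtend_le hvC (hNA j hj),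
        ← Mat.entry_size_eq_of_matExtend_le hv'C' (hNA j hj), hsize,
        ← Mat.compress_entry C N hj n.lt_succ_self, heq,
        Mat.compress_entry C' N hj n.lt_succ_self]
    exact (huniq C' ⟨hA'C', hv'C'⟩).symm

theorem exists_compress_eq (hP : IsVecStrongPair S₁ S₂) {n : ℕ} {D : Mat}
    (hD : InVal S₁ S₂ D) (hDn : levelIn S₂ D = n) {B : Mat} (hB : B.size = n) :
    ∃ C, InVal S₁ S₂ C ∧ levelIn S₂ C = n ∧
      C.compress (ambientLevel Set.univ S₂) n = B := by
  set N := ambientLevel Set.univ S₂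
  induction n generalizing D B with
  | zero =>
    exact ⟨D, hD, hDn, Mat.ext hB.symm fun _ _ _ (hi : _ < 0) => absurd hi (Nat.not_lt_zero _)⟩
  | succ n ih =>
    obtain ⟨AD, vD, hAD, hADn, hvD, hvDn, hADD, -, -⟩ := hD.exists_step hDn
    obtain ⟨A, hA, hAn, hAB⟩ := ih hAD hADn (B := B.restrict n) rfl
    obtain ⟨v, hv, hvn, hvB⟩ :=
      hP.1.exists_entry_ambientLevel_eq hvD (fun j => B.entry n j) hvDn.ge
    have hAmax : ¬ IsMaximalIn S₂ A := hP.2.1.not_isMaximalIn_of_levelIn_eq hAD.mem hD.mem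
      hADD.2.2.1 (hADn.trans hAn.symm)
    obtain ⟨C, ⟨hAC, hvC⟩, huniq⟩ :=
      hP.2.1.existsUnique_immSucc hA.mem hAmax (Mat.isImmSuccIn_univ_matExtend A v)
    have hC : InVal S₁ S₂ C := .step A v C hA hv (hvn.trans hAn.symm) ⟨hAC, hvC⟩ huniq
    refine ⟨C, hC, by rw [levelIn_eq_succ_of_isImmSuccIn hAC, hAn], Mat.ext hB.symm
      fun i j hji (hi : i < n + 1) => ?_⟩
    have hNA : ∀ i < n, N i < A.size :=
      fun i hi => hP.2.1.ambientLevel_lt_size hA.mem (hAn ▸ hi)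
    have hsize : A.size = N n := hAn ▸ hP.2.1.size_eq_ambientLevel hA.mem
    rw [Mat.compress_entry C N hji hi]
    rcases Nat.lt_succ_iff_lt_or_eq.mp hi with hi | rfl
    · rw [← Mat.entry_eq_of_le hAC.2.2.1.le (hNA i hi), ← Mat.compress_entry A N hji hi, hAB,
        Mat.restrict_entry B j hi]
    · rw [← hsize, Mat.entry_size_eq_of_matExtend_le hvC (hNA j hji)]
      rw [hP.ambientLevel_eq] at hvB
      exact hvB j hji

end IsVecStrongPair

/-- The passing numbers of `C` at the nodes of `val(S₁, S₂)` below it. -/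
noncomputable def valCode (S₁ : Set Vec) (S₂ : Set Mat) (C : Mat) : Mat :=
  C.compress (ambientLevel Set.univ S₂) (levelIn (valTree S₁ S₂) C)

namespace IsVecStrongPair

theorem size_eq_ambientLevel (hP : IsVecStrongPair S₁ S₂) {C : Mat}
    (hC : C ∈ valTree S₁ S₂) :
    C.size = ambientLevel Set.univ S₂ (levelIn (valTree S₁ S₂) C) := by
  rw [levelIn_valTree hC]
  exact hP.2.1.size_eq_ambientLevel (InVal.mem hC)

theorem valCode_injOn (hP : IsVecStrongPair S₁ S₂) :
    (valTree S₁ S₂).InjOn (valCode S₁ S₂) := fun C hC C' hC' heq => by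
  have hlevel : levelIn S₂ C = levelIn S₂ C' := by
    rw [← levelIn_valTree hC, ← levelIn_valTree hC']
    exact congrArg Mat.size heq
  refine hP.eq_of_compress_eq hC hC' hlevel rfl ?_
  simpa only [valCode, levelIn_valTree hC, levelIn_valTree hC', hlevel] using heq

theorem valCode_bijOn (hP : IsVecStrongPair S₁ S₂) :
    Set.BijOn (valCode S₁ S₂) (valTree S₁ S₂)
      {B : Mat | (B.size : ℕ∞) < heightIn (valTree S₁ S₂)} := by
  refine ⟨fun C hC => levelIn_lt_heightIn hC, hP.valCode_injOn, fun B hB => ?_⟩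
  obtain ⟨D, hD, hDn⟩ := exists_levelIn_eq_of_lt_heightIn hB
  obtain ⟨C, hC, hCn, hCB⟩ :=
    hP.exists_compress_eq hD ((levelIn_valTree hD).symm.trans hDn) rfl
  refine ⟨C, hC, ?_⟩
  rw [valCode, levelIn_valTree hC, hCn, hCB]

theorem valCode_mono (hP : IsVecStrongPair S₁ S₂) {C D : Mat} (hC : C ∈ valTree S₁ S₂)
    (hCD : C ≤ D) : valCode S₁ S₂ C ≤ valCode S₁ S₂ D :=
  Mat.compress_le_compress hCD (levelIn_le_levelIn hC hCD) fun _ hi =>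
    hP.2.1.ambientLevel_lt_size (InVal.mem hC) (levelIn_valTree hC ▸ hi)

theorem valCode_le_valCode_iff (hP : IsVecStrongPair S₁ S₂) {C D : Mat}
    (hC : C ∈ valTree S₁ S₂) (hD : D ∈ valTree S₁ S₂) :
    valCode S₁ S₂ C ≤ valCode S₁ S₂ D ↔ C ≤ D := by
  refine ⟨fun h => ?_, hP.valCode_mono hC⟩
  obtain ⟨D', hD', hD'D, hlevel⟩ := exists_le_levelIn_eq hD h.1
  have heq : valCode S₁ S₂ D' = valCode S₁ S₂ C :=
    Mat.eq_of_le_of_size_eq (hP.valCode_mono hD' hD'D) h hlevel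
  exact hP.valCode_injOn hC hD' heq.symm ▸ hD'D

theorem isStructIso_invFunOn (hP : IsVecStrongPair S₁ S₂) :
    IsStructIso {A : Mat | (A.size : ℕ∞) < heightIn (valTree S₁ S₂)} (valTree S₁ S₂)
      (Function.invFunOn (valCode S₁ S₂) (valTree S₁ S₂)) := by
  set f := Function.invFunOn (valCode S₁ S₂) (valTree S₁ S₂)
  have hinv := hP.valCode_bijOn.invOn_invFunOn
  have hbij := hP.valCode_bijOn.symm hinv.symm
  have hcode : ∀ A ∈ {A : Mat | (A.size : ℕ∞) < heightIn (valTree S₁ S₂)},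
      valCode S₁ S₂ (f A) = A := fun A hA => hinv.2 hA
  have hsize : ∀ A ∈ {A : Mat | (A.size : ℕ∞) < heightIn (valTree S₁ S₂)},
      (f A).size = ambientLevel Set.univ S₂ A.size := fun A hA => by
    rw [hP.size_eq_ambientLevel (hbij.mapsTo hA)]
    exact congrArg (ambientLevel Set.univ S₂ ∘ Mat.size) (hcode A hA)
  refine ⟨fun A hA => hbij.mapsTo hA, fun A hA B hB h => hbij.injOn hA hB h,
    fun C hC => hbij.surjOn hC, fun A hA B hB => ?_, fun A hA => ?_,
    fun A hA B hB C hC hAB hBC => ?_⟩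
  · rw [← hP.valCode_le_valCode_iff (hbij.mapsTo hA) (hbij.mapsTo hB), hcode A hA, hcode B hB]
  · rw [Mat.levelIn_setOf_size_lt hA]
    exact congrArg Mat.size (hcode A hA).symm
  · rw [hsize A hA, hsize B hB]
    rcases hAB.lt_or_eq with hAB | hAB
    · have hBC' : B.size < (valCode S₁ S₂ (f C)).size := (hcode C hC).symm ▸ hBC
      rw [← Mat.compress_entry (f C) _ hAB hBC']
      exact congrArg (Mat.entry · B.size A.size) (hcode C hC)
    · rw [hAB, (f C).lower _ _ le_rfl, C.lower _ _ le_rfl]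

theorem valCode_eq_of_isStructIso (hP : IsVecStrongPair S₁ S₂) {g : Mat → Mat}
    (hg : IsStructIso {A : Mat | (A.size : ℕ∞) < heightIn (valTree S₁ S₂)}
      (valTree S₁ S₂) g) {A : Mat} (hA : (A.size : ℕ∞) < heightIn (valTree S₁ S₂)) :
    valCode S₁ S₂ (g A) = A := by
  have hlevel : ∀ B ∈ {A : Mat | (A.size : ℕ∞) < heightIn (valTree S₁ S₂)},
      levelIn (valTree S₁ S₂) (g B) = B.size :=
    fun B hB => (hg.levelEq B hB).symm.trans (Mat.levelIn_setOf_size_lt hB)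
  have hsize : ∀ B ∈ {A : Mat | (A.size : ℕ∞) < heightIn (valTree S₁ S₂)},
      (g B).size = ambientLevel Set.univ S₂ B.size := fun B hB => by
    rw [hP.size_eq_ambientLevel (hg.mapsTo B hB), hlevel B hB]
  have hdom : ∀ m < A.size, (A.restrict m).size < heightIn (valTree S₁ S₂) :=
    fun m hm => lt_trans (by exact_mod_cast hm) hA
  refine Mat.ext (hlevel A hA) fun i j hji (hi : i < levelIn _ (g A)) => ?_
  rw [valCode, Mat.compress_entry (g A) _ hji hi]
  rw [hlevel A hA] at hi
  have hsize_i : (g (A.restrict i)).size = ambientLevel Set.univ S₂ i := hsize _ (hdom i hi)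
  have hsize_j : (g (A.restrict j)).size = ambientLevel Set.univ S₂ j :=
    hsize _ (hdom j (hji.trans hi))
  rw [← hsize_i, ← hsize_j]
  exact hg.passing _ (hdom j (hji.trans hi)) _ (hdom i hi) A hA hji.le hi

theorem eqOn_invFunOn_of_isStructIso (hP : IsVecStrongPair S₁ S₂) {g : Mat → Mat}
    (hg : IsStructIso {A : Mat | (A.size : ℕ∞) < heightIn (valTree S₁ S₂)}
      (valTree S₁ S₂) g) :
    Set.EqOn g (Function.invFunOn (valCode S₁ S₂) (valTree S₁ S₂))
      {A : Mat | (A.size : ℕ∞) < heightIn (valTree S₁ S₂)} := fun A hA => by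
  have hinv := hP.valCode_bijOn.invOn_invFunOn
  exact hP.valCode_injOn (hg.mapsTo A hA) ((hP.valCode_bijOn.symm hinv.symm).mapsTo hA)
    ((hP.valCode_eq_of_isStructIso hg hA).trans (hinv.2 hA).symm)

end IsVecStrongPair

/-- For every `k ∈ ω + 1` and every valuation tree `T ⊆ T₂` of height `k`, there is a
unique structural isomorphism `f : T₂(<k) → T`, where `T₂(<k)` is the set of nodes of
`T₂` of level (= number of rows) less than `k`. -/
theorem valuation_tree_unique_structural_iso (k : ℕ∞) (T : Set Mat)
    (hT : IsValTree T) (hht : heightIn T = k) :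
    ∃ f : Mat → Mat, IsStructIso {A : Mat | (A.size : ℕ∞) < k} T f ∧
      ∀ g : Mat → Mat, IsStructIso {A : Mat | (A.size : ℕ∞) < k} T g →
        ∀ A : Mat, (A.size : ℕ∞) < k → g A = f A := by
  obtain ⟨S₁, S₂, hP, rfl⟩ := hT
  subst hht
  exact ⟨_, hP.isStructIso_invFunOn, fun g hg A hA => hP.eqOn_invFunOn_of_isStructIso hg hA⟩
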